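/- arXiv:1202.3570 — 2 statements merged into one kernel-verified Lean document; each statement's English description precedes it below -/
import Mathlib

section
/- Suppose n^{(s)}/log s → ∞ as s → ∞. Then under assumptions A1–A4 the constrained MLE μ̂_0^{(s)} converges in probability to μ_0 if and only if n_0^{(s)} → ∞. -/
open MeasureTheory ProbabilityTheory Filter Finset BoundedContinuousFunction
open scoped NNReal Topology

noncomputable section


/-- The sample mean of the first `n` observations of the sequence `x`. -/
def sampleMean (x : ℕ → ℝ) (n : ℕ) : ℝ := (∑ j ∈ Finset.range n, x j) / n

/-- Vector of sample means: population `0` has sample size `n0`, every other population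
has sample size `nn`.  `X i j` is the `j`-th observation from population `i`. -/
def xbarVec (n0 nn : ℕ) (X : ℕ → ℕ → ℝ) (i : ℕ) : ℝ :=
  sampleMean (X i) (if i = 0 then n0 else nn)

/-- Tree-order restricted MLE of the control mean `μ₀`:
`μ̂₀ = min_{I ⊆ {1,…,s}} (n₀ X̄₀ + Σ_{i∈I} n X̄ᵢ) / (n₀ + n |I|)` (the minimum includes `I = ∅`). -/
def treeMLE0 (n0 nn s : ℕ) (xbar : ℕ → ℝ) : ℝ :=
  ((Finset.Icc 1 s).powerset).inf' (Finset.powerset_nonempty _)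
    fun I => ((n0 : ℝ) * xbar 0 + ∑ i ∈ I, (nn : ℝ) * xbar i)
      / ((n0 : ℝ) + (nn : ℝ) * I.card)

/-- Tree-order restricted MLE of the `i`-th treatment mean (`1 ≤ i ≤ s`):
`μ̂ᵢ = max (μ̂₀, X̄ᵢ)`. -/
def treeMLE (n0 nn s : ℕ) (xbar : ℕ → ℝ) (i : ℕ) : ℝ :=
  max (treeMLE0 n0 nn s xbar) (xbar i)

/-- Tree-order restricted MLE of the common variance `σ²`. -/
def sigmaHat (n0 nn s : ℕ) (X : ℕ → ℕ → ℝ) : ℝ :=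
  (∑ j ∈ Finset.range n0, (X 0 j - treeMLE0 n0 nn s (xbarVec n0 nn X)) ^ 2
    + ∑ i ∈ Finset.Icc 1 s, ∑ j ∈ Finset.range nn,
        (X i j - treeMLE n0 nn s (xbarVec n0 nn X) i) ^ 2)
    / ((n0 + s * nn : ℕ) : ℝ)

/-!
Taking `I = ∅` gives `μ̂₀ ≤ X̄₀`, and every candidate in the minimum is a weighted average of
`X̄₀` and treatment means `X̄ᵢ` whose expectations are `≥ μ₀`. Hence `|μ̂₀ - μ₀| ≥ ε` forces
`|X̄₀ - μ₀| ≥ ε` or `X̄ᵢ - μᵢ ≤ -ε` for some `1 ≤ i ≤ s`, and Gaussian tail bounds with a union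
bound give `P(|μ̂₀ - μ₀| ≥ ε) ≤ 2 exp(-n₀ε²/2σ²) + s exp(-nε²/2σ²)`; the condition
`n / log s → ∞` kills the second term. Conversely, if `n₀` does not tend to infinity then
`n₀ < b` infinitely often, and with a fixed positive probability the first `b` control
observations are all `≤ μ₀ - 1`, in which case `μ̂₀ ≤ X̄₀ ≤ μ₀ - 1`.
-/

lemma treeMLE0_le_xbar_zero {n0 : ℕ} (h0 : 0 < n0) (nn s : ℕ) (xbar : ℕ → ℝ) :
    treeMLE0 n0 nn s xbar ≤ xbar 0 := by
  refine (Finset.inf'_le _ (Finset.empty_mem_powerset _)).trans_eq ?_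
  have : (n0 : ℝ) ≠ 0 := by positivity
  simp [this]

lemma lt_treeMLE0 {n0 : ℕ} (h0 : 0 < n0) (nn s : ℕ) {xbar : ℕ → ℝ} {c : ℝ} (hc0 : c < xbar 0)
    (hc : ∀ i ∈ Icc 1 s, c ≤ xbar i) : c < treeMLE0 n0 nn s xbar := by
  refine (Finset.lt_inf'_iff _).2 fun I hI => ?_
  rw [lt_div_iff₀ (by positivity)]
  have hsum : c * ((n0 : ℝ) + nn * I.card) = n0 * c + ∑ _i ∈ I, (nn : ℝ) * c := by
    rw [sum_const, nsmul_eq_mul]; ring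
  rw [hsum]
  exact add_lt_add_of_lt_of_le (by gcongr) <| sum_le_sum fun i hi =>
    mul_le_mul_of_nonneg_left (hc i (mem_powerset.1 hI hi)) (Nat.cast_nonneg _)

lemma deviation_of_treeMLE0_deviation {n0 : ℕ} (h0 : 0 < n0) {nn s : ℕ} {μ xbar : ℕ → ℝ}
    (hμ : ∀ i ∈ Icc 1 s, μ 0 ≤ μ i) {ε : ℝ} (h : ε ≤ |treeMLE0 n0 nn s xbar - μ 0|) :
    ε ≤ |xbar 0 - μ 0| ∨ ∃ i ∈ Icc 1 s, xbar i - μ i ≤ -ε := by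
  have hle := treeMLE0_le_xbar_zero h0 nn s xbar
  rcases le_abs.1 h with h | h
  · exact Or.inl (le_abs.2 (Or.inl (by linarith)))
  by_contra! hcon
  obtain ⟨h0', hi⟩ := hcon
  have hlt : μ 0 - ε < treeMLE0 n0 nn s xbar :=
    lt_treeMLE0 h0 nn s (by linarith [neg_abs_le (xbar 0 - μ 0)])
      fun i hi' => by linarith [hi i hi', hμ i hi']
  linarith

lemma sampleMean_le_of_forall_le {x : ℕ → ℝ} {n : ℕ} (hn : 0 < n) {c : ℝ}
    (h : ∀ j < n, x j ≤ c) : sampleMean x n ≤ c := by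
  rw [sampleMean, div_le_iff₀ (by positivity)]
  simpa [mul_comm] using sum_le_card_nsmul (range n) x c fun j hj => h j (mem_range.1 hj)

lemma sampleMean_neg (x : ℕ → ℝ) (n : ℕ) : sampleMean (fun j => -x j) n = -sampleMean x n := by
  simp [sampleMean, sum_neg_distrib, neg_div]

section Gaussian

variable {Ω : Type*} [MeasurableSpace Ω] {P : Measure Ω}

lemma hasSubgaussianMGF_sub_of_map_eq_gaussianReal {Y : Ω → ℝ} {θ : ℝ} {v : ℝ≥0}
    (hY : P.map Y = gaussianReal θ v) : HasSubgaussianMGF (fun ω => Y ω - θ) v P := by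
  have hlaw : HasLaw (fun ω => Y ω - θ) (gaussianReal 0 v) P := by
    simpa using gaussianReal_sub_const
      ⟨aemeasurable_of_map_neZero (by rw [hY]; infer_instance), hY⟩ θ
  rw [← HasSubgaussianMGF.id_map_iff hlaw.aemeasurable, hlaw.map_eq]
  exact ⟨integrable_exp_mul_gaussianReal, fun t => by simp [mgf_id_gaussianReal]⟩

lemma measure_biInter_preimage_Iic_ne_zero {v : ℝ≥0} (hv : v ≠ 0) {Y : ℕ → Ω → ℝ}
    (hind : iIndepFun Y P) {θ : ℝ} (hY : ∀ j, P.map (Y j) = gaussianReal θ v) (n : ℕ) (c : ℝ) :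
    P (⋂ j ∈ range n, Y j ⁻¹' Set.Iic c) ≠ 0 := by
  rw [hind.measure_inter_preimage_eq_mul _ fun _ _ => measurableSet_Iic]
  refine prod_ne_zero_iff.2 fun j _ hj => ?_
  have hmeas : AEMeasurable (Y j) P := aemeasurable_of_map_neZero (by rw [hY j]; infer_instance)
  rw [← Measure.map_apply_of_aemeasurable hmeas measurableSet_Iic, hY j] at hj
  simpa using gaussianReal_absolutelyContinuous' θ hv hj

variable [IsProbabilityMeasure P]

lemma measureReal_le_sampleMean_sub_le {Y : ℕ → Ω → ℝ} (hind : iIndepFun Y P) {θ : ℝ}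
    {c : ℝ≥0} (hY : ∀ j, HasSubgaussianMGF (fun ω => Y j ω - θ) c P) (n : ℕ) {ε : ℝ}
    (hε : 0 ≤ ε) :
    P.real {ω | ε ≤ sampleMean (fun j => Y j ω) n - θ} ≤ Real.exp (-(n * (ε ^ 2 / (2 * c)))) := by
  have hsub : {ω | ε ≤ sampleMean (fun j => Y j ω) n - θ}
      ⊆ {ω | n * ε ≤ ∑ j ∈ range n, (Y j ω - θ)} := fun ω hω => by
    rcases Nat.eq_zero_or_pos n with rfl | hn
    · simp
    simp only [Set.mem_ofPred_eq, sampleMean, le_sub_iff_add_le, le_div_iff₀ (by positivity :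
      (0 : ℝ) < n)] at hω
    simp only [Set.mem_ofPred_eq, sum_sub_distrib, sum_const, card_range, nsmul_eq_mul]
    linarith
  have hexp : -(n * ε) ^ 2 / (2 * n * c) = -(n * (ε ^ 2 / (2 * c))) := by
    rcases Nat.eq_zero_or_pos n with rfl | hn
    · simp
    rw [neg_div, show (n * ε) ^ 2 / (2 * n * c) = n * (n * ε ^ 2) / (n * (2 * c)) by ring,
      mul_div_mul_left _ _ (by positivity), mul_div_assoc]
  refine (measureReal_mono hsub).trans (hexp ▸ ?_)
  exact HasSubgaussianMGF.measure_sum_range_ge_le_of_iIndepFun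
    (hind.comp (fun _ x => x - θ) fun _ => measurable_sub_const θ) (fun j _ => hY j) (by positivity)

lemma measureReal_sampleMean_sub_le_neg_le {Y : ℕ → Ω → ℝ} (hind : iIndepFun Y P) {θ : ℝ}
    {c : ℝ≥0} (hY : ∀ j, HasSubgaussianMGF (fun ω => Y j ω - θ) c P) (n : ℕ) {ε : ℝ}
    (hε : 0 ≤ ε) :
    P.real {ω | sampleMean (fun j => Y j ω) n - θ ≤ -ε} ≤ Real.exp (-(n * (ε ^ 2 / (2 * c)))) := by
  have hneg : ∀ j, HasSubgaussianMGF (fun ω => -Y j ω - -θ) c P := fun j => by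
    convert (hY j).neg using 1
    ext ω
    simp only [Pi.neg_apply]
    ring
  have hset : {ω | sampleMean (fun j => Y j ω) n - θ ≤ -ε}
      = {ω | ε ≤ sampleMean (fun j => -Y j ω) n - -θ} := by
    ext ω
    simp only [Set.mem_ofPred_eq, sampleMean_neg]
    constructor <;> intro h <;> linarith
  rw [hset]
  exact measureReal_le_sampleMean_sub_le (hind.comp (fun _ x => -x) fun _ => measurable_neg)
    hneg n hε

lemma measureReal_le_abs_sampleMean_sub_le {Y : ℕ → Ω → ℝ} (hind : iIndepFun Y P) {θ : ℝ}
    {c : ℝ≥0} (hY : ∀ j, HasSubgaussianMGF (fun ω => Y j ω - θ) c P) (n : ℕ) {ε : ℝ}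
    (hε : 0 ≤ ε) :
    P.real {ω | ε ≤ |sampleMean (fun j => Y j ω) n - θ|}
      ≤ 2 * Real.exp (-(n * (ε ^ 2 / (2 * c)))) := by
  have hunion : {ω | ε ≤ |sampleMean (fun j => Y j ω) n - θ|}
      = {ω | ε ≤ sampleMean (fun j => Y j ω) n - θ}
        ∪ {ω | sampleMean (fun j => Y j ω) n - θ ≤ -ε} := by
    ext ω
    simp only [Set.mem_ofPred_eq, Set.mem_union, le_abs, le_neg]
  rw [hunion, two_mul]
  exact (measureReal_union_le _ _).trans (add_le_add
    (measureReal_le_sampleMean_sub_le hind hY n hε)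
    (measureReal_sampleMean_sub_le_neg_le hind hY n hε))

end Gaussian

lemma tendsto_natCast_mul_exp_neg_of_tendsto_div_log {a : ℕ → ℝ}
    (ha : Tendsto (fun s : ℕ => a s / Real.log s) atTop atTop) {κ : ℝ} (hκ : 0 < κ) :
    Tendsto (fun s : ℕ => s * Real.exp (-(a s * κ))) atTop (𝓝 0) := by
  have hlog : Tendsto (fun s : ℕ => Real.log s) atTop atTop :=
    Real.tendsto_log_atTop.comp tendsto_natCast_atTop_atTop
  have hexponent : Tendsto (fun s : ℕ => Real.log s - a s * κ) atTop atBot := by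
    refine tendsto_atBot_mono' _ ?_ (tendsto_neg_atTop_atBot.comp hlog)
    filter_upwards [ha.eventually_ge_atTop (2 / κ), hlog.eventually_gt_atTop 0] with s hs hpos
    rw [le_div_iff₀ hpos, div_mul_eq_mul_div, div_le_iff₀ hκ] at hs
    simp only [Function.comp_apply]
    linarith
  refine (Real.tendsto_exp_atBot.comp hexponent).congr' ?_
  filter_upwards [eventually_gt_atTop 0] with s hs
  rw [Function.comp_apply, sub_eq_add_neg, Real.exp_add, Real.exp_log (by positivity)]

lemma measureReal_treeMLE0_deviation_le {Ω : Type*} [MeasurableSpace Ω] {P : Measure Ω}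
    [IsProbabilityMeasure P] {μ : ℕ → ℝ} {v : ℝ≥0} (hA1 : ∀ i, 1 ≤ i → μ 0 ≤ μ i)
    {n0 : ℕ} (h0 : 0 < n0) (nn s : ℕ) {X : ℕ → ℕ → Ω → ℝ} (hindep : ∀ i, iIndepFun (X i) P)
    (hdist : ∀ i j, P.map (X i j) = gaussianReal (μ i) v) {ε : ℝ} (hε : 0 ≤ ε) :
    P.real {ω | ε ≤ |treeMLE0 n0 nn s (xbarVec n0 nn fun i j => X i j ω) - μ 0|}
      ≤ 2 * Real.exp (-(n0 * (ε ^ 2 / (2 * v)))) + s * Real.exp (-(nn * (ε ^ 2 / (2 * v)))) := by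
  have hsub : {ω | ε ≤ |treeMLE0 n0 nn s (xbarVec n0 nn fun i j => X i j ω) - μ 0|}
      ⊆ {ω | ε ≤ |sampleMean (fun j => X 0 j ω) n0 - μ 0|}
        ∪ ⋃ i ∈ Icc 1 s, {ω | sampleMean (fun j => X i j ω) nn - μ i ≤ -ε} := by
    intro ω hω
    rcases deviation_of_treeMLE0_deviation h0 (fun i hi => hA1 i (mem_Icc.1 hi).1) hω with
      h | ⟨i, hi, h⟩
    · exact Or.inl h
    · have hi0 : i ≠ 0 := Nat.one_le_iff_ne_zero.1 (mem_Icc.1 hi).1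
      exact Or.inr (Set.mem_biUnion hi (by simpa [xbarVec, hi0] using h))
  have hsg : ∀ i j, HasSubgaussianMGF (fun ω => X i j ω - μ i) v P := fun i j =>
    hasSubgaussianMGF_sub_of_map_eq_gaussianReal (hdist i j)
  calc _ ≤ P.real {ω | ε ≤ |sampleMean (fun j => X 0 j ω) n0 - μ 0|}
        + ∑ i ∈ Icc 1 s, P.real {ω | sampleMean (fun j => X i j ω) nn - μ i ≤ -ε} :=
        (measureReal_mono hsub).trans ((measureReal_union_le _ _).trans
          (add_le_add_right (measureReal_biUnion_finset_le _ _) _))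
    _ ≤ 2 * Real.exp (-(n0 * (ε ^ 2 / (2 * v))))
        + ∑ _i ∈ Icc 1 s, Real.exp (-(nn * (ε ^ 2 / (2 * v)))) :=
        add_le_add (measureReal_le_abs_sampleMean_sub_le (hindep 0) (hsg 0) n0 hε)
          (sum_le_sum fun i _ => measureReal_sampleMean_sub_le_neg_le (hindep i) (hsg i) nn hε)
    _ = _ := by rw [sum_const, Nat.card_Icc, nsmul_eq_mul, Nat.add_sub_cancel]

section Model

variable {Ω : Type*} [MeasurableSpace Ω] {P : Measure Ω} {μ : ℕ → ℝ} {v : ℝ≥0}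
  {n0 nn : ℕ → ℕ} {X : ℕ → ℕ → Ω → ℝ}

lemma tendsto_atTop_of_treeMLE0_consistent (hv : v ≠ 0) (h0pos : ∀ s, 0 < n0 s)
    (hindep : iIndepFun (X 0) P) (hdist : ∀ j, P.map (X 0 j) = gaussianReal (μ 0) v)
    (hcons : Tendsto (fun s : ℕ =>
        P {ω | 1 ≤ |treeMLE0 (n0 s) (nn s) s (xbarVec (n0 s) (nn s) fun i j => X i j ω)
          - μ 0|}) atTop (𝓝 0)) :
    Tendsto n0 atTop atTop := by
  by_contra hn0
  obtain ⟨b, hb⟩ : ∃ b, ∃ᶠ s in atTop, n0 s < b := by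
    simpa only [tendsto_atTop, not_forall, not_eventually, not_le] using hn0
  set E := ⋂ j ∈ range b, X 0 j ⁻¹' Set.Iic (μ 0 - 1)
  have hE : P E ≠ 0 := measure_biInter_preimage_Iic_ne_zero hv hindep hdist b _
  have hsub : ∀ s, n0 s < b → E ⊆
      {ω | 1 ≤ |treeMLE0 (n0 s) (nn s) s (xbarVec (n0 s) (nn s) fun i j => X i j ω) - μ 0|} := by
    intro s hs ω hω
    have hmean : sampleMean (fun j => X 0 j ω) (n0 s) ≤ μ 0 - 1 :=
      sampleMean_le_of_forall_le (h0pos s) fun j hj =>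
        Set.mem_iInter₂.1 hω j (mem_range.2 (hj.trans hs))
    have hle := treeMLE0_le_xbar_zero (h0pos s) (nn s) s (xbarVec (n0 s) (nn s) fun i j => X i j ω)
    simp only [xbarVec, if_pos] at hle
    show (1 : ℝ) ≤ |_|
    exact le_abs.2 (Or.inr (by linarith))
  obtain ⟨s, hs, hlt⟩ :=
    (hb.and_eventually (hcons.eventually (gt_mem_nhds (pos_iff_ne_zero.2 hE)))).exists
  exact (measure_mono (hsub s hs)).not_gt hlt

lemma treeMLE0_consistent_of_tendsto_atTop [IsProbabilityMeasure P] (hv : v ≠ 0)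
    (hA1 : ∀ i, 1 ≤ i → μ 0 ≤ μ i) (h0pos : ∀ s, 0 < n0 s) (hindep : ∀ i, iIndepFun (X i) P)
    (hdist : ∀ i j, P.map (X i j) = gaussianReal (μ i) v)
    (hlog : Tendsto (fun s : ℕ => (nn s : ℝ) / Real.log s) atTop atTop)
    (hn0 : Tendsto n0 atTop atTop) (ε : ℝ) (hε : 0 < ε) :
    Tendsto (fun s : ℕ =>
        P {ω | ε ≤ |treeMLE0 (n0 s) (nn s) s (xbarVec (n0 s) (nn s) fun i j => X i j ω)
          - μ 0|}) atTop (𝓝 0) := by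
  have hκ : 0 < ε ^ 2 / (2 * v) := by
    have : (0 : ℝ) < v := NNReal.coe_pos.2 (pos_iff_ne_zero.2 hv)
    positivity
  have hn0exp : Tendsto (fun s => Real.exp (-(n0 s * (ε ^ 2 / (2 * v))))) atTop (𝓝 0) :=
    Real.tendsto_exp_atBot.comp <| tendsto_neg_atTop_atBot.comp <|
      (tendsto_natCast_atTop_atTop.comp hn0).atTop_mul_const hκ
  have hbound : Tendsto (fun s : ℕ => 2 * Real.exp (-(n0 s * (ε ^ 2 / (2 * v))))
      + s * Real.exp (-(nn s * (ε ^ 2 / (2 * v))))) atTop (𝓝 0) := by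
    simpa using (hn0exp.const_mul 2).add (tendsto_natCast_mul_exp_neg_of_tendsto_div_log hlog hκ)
  have hreal := squeeze_zero (fun _ => measureReal_nonneg) (fun s =>
    measureReal_treeMLE0_deviation_le hA1 (h0pos s) (nn s) s hindep hdist hε.le) hbound
  exact (ENNReal.tendsto_toReal_iff (fun _ => measure_ne_top _ _) ENNReal.zero_ne_top).1
    (by simpa [measureReal_def] using hreal)

end Model

theorem treeMLE0_consistent_iff_n0_tendsto_atTop_general
    {Ω : Type*} [MeasurableSpace Ω] (P : Measure Ω) [IsProbabilityMeasure P]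
    (μ : ℕ → ℝ) (v : ℝ≥0) (hv : v ≠ 0)
    (n0 nn : ℕ → ℕ)
    -- A1: tree order restriction
    (hA1 : ∀ i, 1 ≤ i → μ 0 ≤ μ i)
    -- A4: common treatment sample size, non-decreasing sample sizes
    (h0pos : ∀ s, 1 ≤ n0 s)
    -- A3: independent normal observations, common variance v
    (X : ℕ → ℕ → Ω → ℝ)
    (hindep : iIndepFun (fun p : ℕ × ℕ => X p.1 p.2) P)
    (hdist : ∀ i j, Measure.map (X i j) P = gaussianReal (μ i) v)
    (hlog : Tendsto (fun s : ℕ => (nn s : ℝ) / Real.log s) atTop atTop) :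
    (∀ ε : ℝ, 0 < ε →
        Tendsto (fun s : ℕ =>
            P {ω | ε ≤ |treeMLE0 (n0 s) (nn s) s (xbarVec (n0 s) (nn s) fun i j => X i j ω)
                - μ 0|})
          atTop (𝓝 0))
      ↔ Tendsto n0 atTop atTop := by
  have hrow : ∀ i, iIndepFun (X i) P := fun i =>
    hindep.precomp (g := Prod.mk i) (Prod.mk_right_injective i)
  exact ⟨fun hcons => tendsto_atTop_of_treeMLE0_consistent hv h0pos (hrow 0) (hdist 0)
      (hcons 1 one_pos),
    treeMLE0_consistent_of_tendsto_atTop hv hA1 h0pos hrow hdist hlog⟩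

/-- Under A1–A4, if `n⁽ˢ⁾ / log s → ∞` as `s → ∞`, then the constrained
MLE `μ̂₀⁽ˢ⁾` converges in probability to `μ₀` if and only if `n₀⁽ˢ⁾ → ∞`. -/
theorem treeMLE0_consistent_iff_n0_tendsto_atTop
    {Ω : Type*} [MeasurableSpace Ω] (P : Measure Ω) [IsProbabilityMeasure P]
    (μ : ℕ → ℝ) (v : ℝ≥0) (hv : v ≠ 0)
    (n0 nn : ℕ → ℕ)
    -- A1: tree order restriction
    (hA1 : ∀ i, 1 ≤ i → μ 0 ≤ μ i)
    -- A2: uniformly bounded means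
    (hA2 : ∃ B > 0, ∀ i, μ i ≤ B)
    -- A4: common treatment sample size, non-decreasing sample sizes
    (h0pos : ∀ s, 1 ≤ n0 s) (hnpos : ∀ s, 1 ≤ nn s)
    (h0mono : Monotone n0) (hnmono : Monotone nn)
    -- A3: independent normal observations, common variance v
    (X : ℕ → ℕ → Ω → ℝ)
    (hmeas : ∀ i j, Measurable (X i j))
    (hindep : iIndepFun (fun p : ℕ × ℕ => X p.1 p.2) P)
    (hdist : ∀ i j, Measure.map (X i j) P = gaussianReal (μ i) v)
    (hlog : Tendsto (fun s : ℕ => (nn s : ℝ) / Real.log s) atTop atTop) :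
    (∀ ε : ℝ, 0 < ε →
        Tendsto (fun s : ℕ =>
            P {ω | ε ≤ |treeMLE0 (n0 s) (nn s) s (xbarVec (n0 s) (nn s) fun i j => X i j ω)
                - μ 0|})
          atTop (𝓝 0))
      ↔ Tendsto n0 atTop atTop :=
  treeMLE0_consistent_iff_n0_tendsto_atTop_general P μ v hv n0 nn hA1 h0pos X hindep hdist hlog
end
end

section
/- Under assumption A4, if (ρ^{(s)}/(1+ρ^{(s)})) λ^{(s)} 𝟙{λ^{(s)} < 0} → 0 in probability, where ρ^{(s)} = s·n^{(s)}/n_0^{(s)} and λ^{(s)} = min_{1≤i≤s} (X̄_i^{(s)} − X̄_0^{(s)}), then X̄_0^{(s)} − μ̂_0^{(s)} → 0 in probability. -/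
open MeasureTheory ProbabilityTheory Filter Finset BoundedContinuousFunction
open scoped NNReal Topology

/-!
The bound behind the theorem is deterministic. Each pooled mean in the minimum defining `μ̂₀`
averages `X̄₀` with treatment means that are all at least `X̄₀ + min(λ, 0)`, and the treatments
carry weight at most `s n / (n₀ + s n) = ρ/(1+ρ)`; hence
`0 ≤ X̄₀ - μ̂₀ ≤ (ρ/(1+ρ)) |min(λ, 0)|` pointwise, and convergence in probability transfers by
monotonicity of the measure.
-/

noncomputable section


/-- `λ⁽ˢ⁾ = min_{1 ≤ i ≤ s} (X̄ᵢ − X̄₀)` (junk value `0` if `s = 0`). -/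
def lamFun (s : ℕ) (xbar : ℕ → ℝ) : ℝ :=
  if h : (Finset.Icc 1 s).Nonempty then (Finset.Icc 1 s).inf' h fun i => xbar i - xbar 0
  else 0

lemma treeMLE0_le_xbar0 {n0 : ℕ} (hn0 : 0 < n0) (nn s : ℕ) (xbar : ℕ → ℝ) :
    treeMLE0 n0 nn s xbar ≤ xbar 0 := by
  have hn0' : (n0 : ℝ) ≠ 0 := by positivity
  refine (inf'_le _ (empty_mem_powerset _)).trans_eq ?_
  simp [mul_div_cancel_left₀ _ hn0']

lemma lamFun_le_sub {s i : ℕ} (hi : i ∈ Icc 1 s) (xbar : ℕ → ℝ) :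
    lamFun s xbar ≤ xbar i - xbar 0 := by
  rw [lamFun, dif_pos ⟨i, hi⟩]
  exact inf'_le _ hi

lemma div_add_self_le_div_add_self {a t u : ℝ} (ha : 0 < a) (ht : 0 ≤ t) (htu : t ≤ u) :
    t / (a + t) ≤ u / (a + u) := by
  rw [div_le_div_iff₀ (by linarith) (by linarith)]
  nlinarith

lemma xbar0_add_mul_le_pooled_mean {n0 nn : ℕ} (hn0 : 0 < n0) (xbar : ℕ → ℝ) (I : Finset ℕ)
    {m : ℝ} (hm : ∀ i ∈ I, m ≤ xbar i - xbar 0) :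
    xbar 0 + nn * I.card / (n0 + nn * I.card) * m ≤
      ((n0 : ℝ) * xbar 0 + ∑ i ∈ I, (nn : ℝ) * xbar i) / (n0 + nn * I.card) := by
  have hd : (0 : ℝ) < n0 + nn * I.card := by positivity
  have hsum : ∑ i ∈ I, (nn : ℝ) * (xbar 0 + m) ≤ ∑ i ∈ I, (nn : ℝ) * xbar i :=
    sum_le_sum fun i hi => mul_le_mul_of_nonneg_left (by linarith [hm i hi]) (by positivity)
  rw [sum_const, nsmul_eq_mul] at hsum
  have hcancel : (nn : ℝ) * I.card / (n0 + nn * I.card) * m * (n0 + nn * I.card)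
      = nn * I.card * m := by field_simp
  rw [le_div_iff₀ hd, add_mul, hcancel]
  linarith

lemma xbar0_add_mul_le_treeMLE0 {n0 : ℕ} (hn0 : 0 < n0) (nn s : ℕ) (xbar : ℕ → ℝ) {m : ℝ}
    (hm0 : m ≤ 0) (hm : ∀ i ∈ Icc 1 s, m ≤ xbar i - xbar 0) :
    xbar 0 + s * nn / (n0 + s * nn) * m ≤ treeMLE0 n0 nn s xbar := by
  refine le_inf' _ _ fun I hI => ?_
  have hIs : I ⊆ Icc 1 s := mem_powerset.mp hI
  have hcard : (nn : ℝ) * I.card ≤ s * nn := by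
    have : (I.card : ℝ) ≤ s := by exact_mod_cast (card_le_card hIs).trans (by simp)
    nlinarith [(Nat.cast_nonneg nn : (0 : ℝ) ≤ nn)]
  have hweight : (nn : ℝ) * I.card / (n0 + nn * I.card) ≤ s * nn / (n0 + s * nn) :=
    div_add_self_le_div_add_self (by positivity) (by positivity) hcard
  calc xbar 0 + s * nn / (n0 + s * nn) * m
      ≤ xbar 0 + nn * I.card / (n0 + nn * I.card) * m := by nlinarith
    _ ≤ _ := xbar0_add_mul_le_pooled_mean hn0 xbar I fun i hi => hm i (hIs hi)

lemma abs_xbar0_sub_treeMLE0_le {n0 : ℕ} (hn0 : 0 < n0) (nn s : ℕ) (xbar : ℕ → ℝ) :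
    |xbar 0 - treeMLE0 n0 nn s xbar| ≤
      |((s : ℝ) * nn / n0) / (1 + (s : ℝ) * nn / n0) *
        (if lamFun s xbar < 0 then lamFun s xbar else 0)| := by
  set m := if lamFun s xbar < 0 then lamFun s xbar else 0
  have hm0 : m ≤ 0 := by unfold m; split_ifs <;> linarith
  have hm : ∀ i ∈ Icc 1 s, m ≤ xbar i - xbar 0 := fun i hi =>
    (show m ≤ lamFun s xbar by unfold m; split_ifs <;> linarith).trans (lamFun_le_sub hi xbar)
  have hrho : ((s : ℝ) * nn / n0) / (1 + (s : ℝ) * nn / n0) = s * nn / (n0 + s * nn) := by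
    have : (n0 : ℝ) ≠ 0 := by positivity
    field_simp
  have hlower := xbar0_add_mul_le_treeMLE0 hn0 nn s xbar hm0 hm
  have hupper := treeMLE0_le_xbar0 hn0 nn s xbar
  have hweight : 0 ≤ (s : ℝ) * nn / (n0 + s * nn) := by positivity
  rw [hrho, abs_of_nonneg (by linarith), abs_of_nonpos (mul_nonpos_of_nonneg_of_nonpos hweight hm0)]
  linarith

theorem xbar0_sub_treeMLE0_tendsto_zero_in_probability_general
    {Ω : Type*} [MeasurableSpace Ω] (P : Measure Ω)
    (n0 nn : ℕ → ℕ)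
    -- A4: common treatment sample size, non-decreasing sample sizes
    (h0pos : ∀ s, 1 ≤ n0 s)
    (X : ℕ → ℕ → Ω → ℝ)
    (hyp : ∀ ε : ℝ, 0 < ε →
        Tendsto (fun s : ℕ =>
            P {ω | ε ≤ |((s : ℝ) * nn s / n0 s) / (1 + (s : ℝ) * nn s / n0 s) *
                (if lamFun s (xbarVec (n0 s) (nn s) fun i j => X i j ω) < 0 then
                  lamFun s (xbarVec (n0 s) (nn s) fun i j => X i j ω) else 0)|})
          atTop (𝓝 0)) :
    ∀ ε : ℝ, 0 < ε →
      Tendsto (fun s : ℕ =>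
          P {ω | ε ≤ |(xbarVec (n0 s) (nn s) fun i j => X i j ω) 0
              - treeMLE0 (n0 s) (nn s) s (xbarVec (n0 s) (nn s) fun i j => X i j ω)|})
        atTop (𝓝 0) := by
  intro ε hε
  refine tendsto_of_tendsto_of_tendsto_of_le_of_le tendsto_const_nhds (hyp ε hε)
    (fun s => zero_le) fun s => measure_mono fun ω hω => ?_
  exact le_trans hω (abs_xbar0_sub_treeMLE0_le (h0pos s) (nn s) s _)

/-- Under assumption A4, if `(ρ⁽ˢ⁾/(1+ρ⁽ˢ⁾)) λ⁽ˢ⁾ 𝟙{λ⁽ˢ⁾ < 0} → 0` in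
probability, where `ρ⁽ˢ⁾ = s n⁽ˢ⁾ / n₀⁽ˢ⁾` and `λ⁽ˢ⁾ = min_{1 ≤ i ≤ s} (X̄ᵢ − X̄₀)`, then
`X̄₀⁽ˢ⁾ − μ̂₀⁽ˢ⁾ → 0` in probability. -/
theorem xbar0_sub_treeMLE0_tendsto_zero_in_probability
    {Ω : Type*} [MeasurableSpace Ω] (P : Measure Ω) [IsProbabilityMeasure P]
    (μ : ℕ → ℝ) (v : ℝ≥0) (hv : v ≠ 0)
    (n0 nn : ℕ → ℕ)
    -- A4: common treatment sample size, non-decreasing sample sizes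
    (h0pos : ∀ s, 1 ≤ n0 s) (hnpos : ∀ s, 1 ≤ nn s)
    (h0mono : Monotone n0) (hnmono : Monotone nn)
    -- independent normal observations, common variance v
    (X : ℕ → ℕ → Ω → ℝ)
    (hmeas : ∀ i j, Measurable (X i j))
    (hindep : iIndepFun (fun p : ℕ × ℕ => X p.1 p.2) P)
    (hdist : ∀ i j, Measure.map (X i j) P = gaussianReal (μ i) v)
    (hyp : ∀ ε : ℝ, 0 < ε →
        Tendsto (fun s : ℕ =>
            P {ω | ε ≤ |((s : ℝ) * nn s / n0 s) / (1 + (s : ℝ) * nn s / n0 s) *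
                (if lamFun s (xbarVec (n0 s) (nn s) fun i j => X i j ω) < 0 then
                  lamFun s (xbarVec (n0 s) (nn s) fun i j => X i j ω) else 0)|})
          atTop (𝓝 0)) :
    ∀ ε : ℝ, 0 < ε →
      Tendsto (fun s : ℕ =>
          P {ω | ε ≤ |(xbarVec (n0 s) (nn s) fun i j => X i j ω) 0
              - treeMLE0 (n0 s) (nn s) s (xbarVec (n0 s) (nn s) fun i j => X i j ω)|})
        atTop (𝓝 0) :=
  xbar0_sub_treeMLE0_tendsto_zero_in_probability_general P n0 nn h0pos X hyp
end
end
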